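/- arXiv:math/9801123 — 2 statements merged into one kernel-verified Lean document; each statement's English description precedes it below -/
import Mathlib

section
/- The Milnor number of the Brieskorn polynomial f(x_0,...,x_n) = x_0^{a_0} + x_1^{a_1} + ... + x_n^{a_n} (with each a_i ≥ 2) at the origin equals (a_0 - 1)(a_1 - 1)···(a_n - 1); that is, the dimension as a complex vector space of the quotient of the formal power series ring C[[x_0,...,x_n]] by the ideal generated by the partial derivatives ∂f/∂x_i = a_i x_i^{a_i - 1} is (a_0 - 1)(a_1 - 1)···(a_n - 1). -/
/-!
Since every `a i` is invertible in `ℂ`, the Jacobian ideal is the monomial ideal generated by the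
`x_i ^ (a_i - 1)`. A power series lies in the ideal generated by the `x_i ^ b_i` iff its
coefficients vanish on the box `{m | ∀ i, m i < b i}`, so reading off these coefficients
identifies the quotient with the functions on the box, a space of dimension `∏ b_i`.
-/

open MvPowerSeries

namespace MvPowerSeries

variable {σ : Type*} [Fintype σ] (b : σ → ℕ)

section CommSemiring

variable {R : Type*} [CommSemiring R]

theorem mem_span_range_X_pow_iff {f : MvPowerSeries σ R} :
    f ∈ Ideal.span (Set.range fun i => (X i : MvPowerSeries σ R) ^ b i) ↔
      ∀ m : σ →₀ ℕ, (∀ i, m i < b i) → coeff m f = 0 := by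
  classical
  rw [Ideal.mem_span_range_iff_exists_fun]
  constructor
  · rintro ⟨c, rfl⟩ m hm
    rw [map_sum]
    exact Finset.sum_eq_zero fun i _ => X_pow_dvd_iff.mp (dvd_mul_left _ _) m (hm i)
  · intro hf
    -- Each coefficient outside the box is assigned to one variable `i` with `b i ≤ m i`.
    let part (i : σ) : MvPowerSeries σ R := fun m =>
      if h : ∃ j, b j ≤ m j then if h.choose = i then coeff m f else 0 else 0
    have hpart : ∀ i, X i ^ b i ∣ part i := fun i => X_pow_dvd_iff.mpr fun m hm => by
      show dite _ _ _ = 0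
      split_ifs with h hi
      · exact absurd (hi ▸ h.choose_spec) (not_le.mpr hm)
      all_goals rfl
    choose c hc using hpart
    refine ⟨c, ?_⟩
    ext m
    simp_rw [mul_comm (c _), ← hc, map_sum]
    show ∑ i, dite _ _ _ = _
    split_ifs with h
    · simp
    · push Not at h
      simp [hf m h]

noncomputable def boxCoeffs : MvPowerSeries σ R →ₗ[R] ((Π i, Fin (b i)) → R) :=
  LinearMap.pi fun d => coeff (Finsupp.equivFunOnFinite.symm fun i => (d i : ℕ))

theorem boxCoeffs_surjective : Function.Surjective (boxCoeffs (R := R) b) := by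
  classical
  intro g
  refine ⟨fun m => if h : ∀ i, m i < b i then g fun i => ⟨m i, h i⟩ else 0, ?_⟩
  funext d
  show dite _ _ _ = _
  rw [dif_pos fun i => by simp]
  rfl

theorem ker_boxCoeffs :
    LinearMap.ker (boxCoeffs (R := R) b) =
      (Ideal.span (Set.range fun i => (X i : MvPowerSeries σ R) ^ b i)).restrictScalars R := by
  ext f
  rw [Submodule.restrictScalars_mem, mem_span_range_X_pow_iff, LinearMap.mem_ker, funext_iff]
  constructor
  · intro hf m hm
    simpa [boxCoeffs] using hf fun i => ⟨m i, hm i⟩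
  · intro hf d
    exact hf _ fun i => (d i).isLt

end CommSemiring

noncomputable def quotientSpanXPowEquiv (R : Type*) [CommRing R] :
    (MvPowerSeries σ R ⧸ Ideal.span (Set.range fun i => (X i : MvPowerSeries σ R) ^ b i)) ≃ₗ[R]
      ((Π i, Fin (b i)) → R) :=
  (Submodule.Quotient.restrictScalarsEquiv R
      (Ideal.span (Set.range fun i => (X i : MvPowerSeries σ R) ^ b i))).symm.trans <|
    (Submodule.quotEquivOfEq _ _ (ker_boxCoeffs b).symm).trans <|
      (boxCoeffs b).quotKerEquivOfSurjective (boxCoeffs_surjective b)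

theorem finrank_quotient_span_X_pow {K : Type*} [Field K] :
    Module.finrank K
      (MvPowerSeries σ K ⧸ Ideal.span (Set.range fun i => (X i : MvPowerSeries σ K) ^ b i)) =
      ∏ i, b i := by
  classical
  rw [(quotientSpanXPowEquiv b K).finrank_eq, Module.finrank_fintype_fun_eq_card,
    Fintype.card_pi]
  simp

end MvPowerSeries

theorem Ideal.span_range_unit_mul {ι α : Type*} [CommSemiring α] (u : ι → αˣ) (g : ι → α) :
    Ideal.span (Set.range fun i => (u i : α) * g i) = Ideal.span (Set.range g) := by
  apply le_antisymm <;> rw [Ideal.span_le] <;> rintro - ⟨i, rfl⟩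
  · exact Ideal.mul_mem_left _ _ (Ideal.subset_span ⟨i, rfl⟩)
  · rw [← (u i).inv_mul_cancel_left (g i)]
    exact Ideal.mul_mem_left _ _ (Ideal.subset_span ⟨i, rfl⟩)

/-- The Milnor number of the Brieskorn polynomial `x_0^{a_0} + ⋯ + x_n^{a_n}` (each `a i ≥ 2`)
is `∏ (a i - 1)`: the dimension over `ℂ` of the quotient of the formal power series ring
by the Jacobian ideal, which is generated by the partial derivatives `a_i x_i^{a_i - 1}`. -/
theorem brieskorn_milnor_number (n : ℕ) (a : Fin (n + 1) → ℕ) (ha : ∀ i, 2 ≤ a i) :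
    Module.finrank ℂ
      (MvPowerSeries (Fin (n + 1)) ℂ ⧸
        Ideal.span (Set.range fun i : Fin (n + 1) =>
          (a i : MvPowerSeries (Fin (n + 1)) ℂ) * MvPowerSeries.X i ^ (a i - 1))) =
    ∏ i : Fin (n + 1), (a i - 1) := by
  have hunit : ∀ i, IsUnit (a i : MvPowerSeries (Fin (n + 1)) ℂ) := fun i => by
    rw [← map_natCast (C (σ := Fin (n + 1)) (R := ℂ))]
    exact (Nat.cast_ne_zero.mpr (by grind)).isUnit.map C
  choose u hu using hunit
  have hspan :=
    Ideal.span_range_unit_mul u fun i => (X i : MvPowerSeries (Fin (n + 1)) ℂ) ^ (a i - 1)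
  simp only [hu] at hspan
  rw [hspan, finrank_quotient_span_X_pow]
end

section
/- For pairwise coprime integers a, b, c ≥ 2, the integer ∏_{ζ^a=1,ζ≠1} ∏_{ξ^b=1,ξ≠1} ∏_{ω^c=1,ω≠1} (1 - ζξω) equals ±1. -/
open Polynomial Finset

/-- `x^n - 1 = ∏ (x - ω)` over all `n`-th roots of unity in `ℂ`. -/
lemma prod_X_sub_nthRoots (n : ℕ) (hn : 0 < n) (x : ℂ) :
    ∏ ω ∈ nthRootsFinset n (1 : ℂ), (x - ω) = x ^ n - 1 := by
  have h := Complex.isPrimitiveRoot_exp n hn.ne'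
  have := Polynomial.X_pow_sub_one_eq_prod hn h
  have := congrArg (Polynomial.eval x) this
  simpa [Polynomial.eval_prod] using this.symm

lemma prod_one_sub_mul (n : ℕ) (hn : 0 < n) {u : ℂ} (hu : u ≠ 0) :
    ∏ ω ∈ nthRootsFinset n (1 : ℂ), (1 - u * ω) = 1 - u ^ n := by
  have hcard : (nthRootsFinset n (1 : ℂ)).card = n := by
    have h := Complex.isPrimitiveRoot_exp n hn.ne'
    simpa using h.card_nthRootsFinset
  have key : ∏ ω ∈ nthRootsFinset n (1 : ℂ), (1 - u * ω)
      = (∏ _ω ∈ nthRootsFinset n (1 : ℂ), u) * ∏ ω ∈ nthRootsFinset n (1 : ℂ), (u⁻¹ - ω) := by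
    rw [← Finset.prod_mul_distrib]
    refine Finset.prod_congr rfl fun ω _ => ?_
    field_simp
  rw [key, Finset.prod_const, hcard, prod_X_sub_nthRoots n hn, mul_sub, mul_one, inv_pow, mul_inv_cancel₀ (pow_ne_zero _ hu)]

lemma prod_erase_one_sub_mul (n : ℕ) (hn : 0 < n) {u : ℂ} (hu : u ≠ 0) (hu1 : u ≠ 1) :
    ∏ ω ∈ (nthRootsFinset n (1 : ℂ)).erase 1, (1 - u * ω) = (1 - u ^ n) / (1 - u) := by
  have h1 : (1 : ℂ) ∈ nthRootsFinset n (1 : ℂ) := Polynomial.one_mem_nthRootsFinset hn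
  have := Finset.mul_prod_erase (nthRootsFinset n (1 : ℂ)) (fun ω => 1 - u * ω) h1
  rw [prod_one_sub_mul n hn hu] at this
  have hne : (1 : ℂ) - u ≠ 0 := sub_ne_zero.mpr (Ne.symm hu1)
  rw [eq_div_iff hne, mul_comm]
  simpa using this

/-- Reindexing a product over nontrivial `n`-th roots of unity by `x ↦ x^k`, `k` coprime to `n`. -/
lemma prod_pow_reindex (n k : ℕ) (hn : 1 < n) (hk : Nat.Coprime n k) (f : ℂ → ℂ) :
    ∏ x ∈ (nthRootsFinset n (1 : ℂ)).erase 1, f (x ^ k) =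
      ∏ x ∈ (nthRootsFinset n (1 : ℂ)).erase 1, f x := by
  obtain ⟨d, -, hd⟩ := Nat.exists_mul_mod_eq_one_of_coprime hk.symm hn
  have hn0 : 0 < n := by omega
  have hkd : ∀ x : ℂ, x ∈ nthRootsFinset n (1 : ℂ) → (x ^ k) ^ d = x := by
    intro x hx
    rw [Polynomial.mem_nthRootsFinset hn0] at hx
    rw [← pow_mul, ← Nat.div_add_mod (k * d) n, hd, pow_add, pow_mul, hx, one_pow, one_mul, pow_one]
  have hmem : ∀ (m : ℕ), Nat.Coprime n m → ∀ x ∈ (nthRootsFinset n (1 : ℂ)).erase 1,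
      x ^ m ∈ (nthRootsFinset n (1 : ℂ)).erase 1 := by
    intro m hm x hx
    rw [Finset.mem_erase] at hx ⊢
    obtain ⟨hx1, hxr⟩ := hx
    rw [Polynomial.mem_nthRootsFinset hn0] at hxr ⊢
    refine ⟨?_, by rw [← pow_mul, mul_comm, pow_mul, hxr, one_pow]⟩
    intro hxm
    apply hx1
    have hord : orderOf x ∣ n := orderOf_dvd_of_pow_eq_one hxr
    have hordm : orderOf x ∣ m := orderOf_dvd_of_pow_eq_one hxm
    have : orderOf x ∣ Nat.gcd n m := Nat.dvd_gcd hord hordm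
    rw [Nat.Coprime.gcd_eq_one hm] at this
    exact orderOf_eq_one_iff.mp (Nat.dvd_one.mp this)
  have hkd' : Nat.Coprime n d := by
    have hmod : d * k ≡ 1 [MOD n] := by
      unfold Nat.ModEq
      rw [Nat.mod_eq_of_lt hn, mul_comm]
      exact hd
    exact (Nat.coprime_of_mul_modEq_one k hmod).symm
  refine Finset.prod_nbij' (fun x => x ^ k) (fun x => x ^ d) (hmem k hk) (hmem d hkd') ?_ ?_ ?_
  · intro x hx; exact hkd x (Finset.mem_of_mem_erase hx)
  · intro x hx
    have hx' := Finset.mem_of_mem_erase hx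
    rw [Polynomial.mem_nthRootsFinset hn0] at hx'
    show (x ^ d) ^ k = x
    rw [← pow_mul, ← Nat.div_add_mod (d * k) n, mul_comm d k, hd, pow_add, pow_mul, hx', one_pow,
      one_mul, pow_one]
  · intro x _; rfl

open Polynomial in
/-- For pairwise coprime `a, b, c ≥ 2`, the characteristic polynomial of the Brieskorn
monodromy evaluated at `1`, namely `∏ (1 - ζξω)` over all nontrivial `a`-th, `b`-th, `c`-th
roots of unity, has absolute value `1` (equivalently `K(a,b,c)` is an integral homology
sphere). -/
theorem brieskorn_homology_sphere_determinant (a b c : ℕ) (ha : 2 ≤ a) (hb : 2 ≤ b)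
    (hc : 2 ≤ c) (hab : Nat.Coprime a b) (hac : Nat.Coprime a c) (hbc : Nat.Coprime b c) :
    ‖(∏ ζ ∈ ((nthRoots a (1 : ℂ)).toFinset.erase 1),
        ∏ ξ ∈ ((nthRoots b (1 : ℂ)).toFinset.erase 1),
          ∏ ω ∈ ((nthRoots c (1 : ℂ)).toFinset.erase 1),
            (1 - ζ * ξ * ω))‖ = 1 := by
  have ha0 : 0 < a := by omega
  have hb0 : 0 < b := by omega
  have hc0 : 0 < c := by omega
  have hSa : (nthRoots a (1 : ℂ)).toFinset = nthRootsFinset a (1 : ℂ) := rfl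
  have hSb : (nthRoots b (1 : ℂ)).toFinset = nthRootsFinset b (1 : ℂ) := rfl
  have hSc : (nthRoots c (1 : ℂ)).toFinset = nthRootsFinset c (1 : ℂ) := rfl
  rw [hSa, hSb, hSc]
  -- key facts about ζ ξ
  have hprodne : ∀ ζ ∈ (nthRootsFinset a (1 : ℂ)).erase 1, ∀ ξ ∈ (nthRootsFinset b (1 : ℂ)).erase 1,
      ζ * ξ ≠ 0 ∧ ζ * ξ ≠ 1 := by
    intro ζ hζ ξ hξ
    rw [Finset.mem_erase] at hζ hξ
    obtain ⟨hζ1, hζr⟩ := hζ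
    obtain ⟨hξ1, hξr⟩ := hξ
    have hζ0 : ζ ≠ 0 := Polynomial.ne_zero_of_mem_nthRootsFinset one_ne_zero hζr
    have hξ0 : ξ ≠ 0 := Polynomial.ne_zero_of_mem_nthRootsFinset one_ne_zero hξr
    refine ⟨mul_ne_zero hζ0 hξ0, ?_⟩
    intro h
    apply hζ1
    rw [Polynomial.mem_nthRootsFinset ha0] at hζr
    rw [Polynomial.mem_nthRootsFinset hb0] at hξr
    have hζb : ζ ^ b = 1 := by
      have : (ζ * ξ) ^ b = 1 := by rw [h, one_pow]
      rwa [mul_pow, hξr, mul_one] at this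
    have h1 : orderOf ζ ∣ Nat.gcd a b :=
      Nat.dvd_gcd (orderOf_dvd_of_pow_eq_one hζr) (orderOf_dvd_of_pow_eq_one hζb)
    rw [hab] at h1
    calc ζ = ζ ^ orderOf ζ := by rw [Nat.dvd_one.mp h1, pow_one]
    _ = 1 := pow_orderOf_eq_one ζ
  -- inner product over ω
  have step1 : ∀ ζ ∈ (nthRootsFinset a (1 : ℂ)).erase 1, ∀ ξ ∈ (nthRootsFinset b (1 : ℂ)).erase 1,
      ∏ ω ∈ (nthRootsFinset c (1 : ℂ)).erase 1, (1 - ζ * ξ * ω)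
        = (1 - (ζ * ξ) ^ c) / (1 - ζ * ξ) := by
    intro ζ hζ ξ hξ
    obtain ⟨h0, h1⟩ := hprodne ζ hζ ξ hξ
    exact prod_erase_one_sub_mul c hc0 h0 h1
  rw [Finset.prod_congr rfl fun ζ hζ => Finset.prod_congr rfl fun ξ hξ => step1 ζ hζ ξ hξ]
  -- split into numerator / denominator
  have hsplit : ∏ ζ ∈ (nthRootsFinset a (1 : ℂ)).erase 1, ∏ ξ ∈ (nthRootsFinset b (1 : ℂ)).erase 1,
      ((1 - (ζ * ξ) ^ c) / (1 - ζ * ξ))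
      = (∏ ζ ∈ (nthRootsFinset a (1 : ℂ)).erase 1, ∏ ξ ∈ (nthRootsFinset b (1 : ℂ)).erase 1,
          (1 - (ζ * ξ) ^ c)) /
        (∏ ζ ∈ (nthRootsFinset a (1 : ℂ)).erase 1, ∏ ξ ∈ (nthRootsFinset b (1 : ℂ)).erase 1,
          (1 - ζ * ξ)) := by
    simp [Finset.prod_div_distrib]
  rw [hsplit]
  -- numerator equals denominator via reindexing by c-th powers
  have hnum : (∏ ζ ∈ (nthRootsFinset a (1 : ℂ)).erase 1, ∏ ξ ∈ (nthRootsFinset b (1 : ℂ)).erase 1,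
      (1 - (ζ * ξ) ^ c))
      = ∏ ζ ∈ (nthRootsFinset a (1 : ℂ)).erase 1, ∏ ξ ∈ (nthRootsFinset b (1 : ℂ)).erase 1,
          (1 - ζ * ξ) := by
    have h1 : ∀ ζ : ℂ, ∏ ξ ∈ (nthRootsFinset b (1 : ℂ)).erase 1, (1 - (ζ * ξ) ^ c)
        = ∏ ξ ∈ (nthRootsFinset b (1 : ℂ)).erase 1, (1 - ζ ^ c * ξ) := by
      intro ζ
      have := prod_pow_reindex b c (by omega) hbc (fun ξ => 1 - ζ ^ c * ξ)
      rw [← this]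
      exact Finset.prod_congr rfl fun ξ _ => by ring
    rw [Finset.prod_congr rfl fun ζ _ => h1 ζ]
    exact prod_pow_reindex a c (by omega) hac
      (fun ζ => ∏ ξ ∈ (nthRootsFinset b (1 : ℂ)).erase 1, (1 - ζ * ξ))
  rw [hnum]
  -- denominator is nonzero
  have hden : (∏ ζ ∈ (nthRootsFinset a (1 : ℂ)).erase 1, ∏ ξ ∈ (nthRootsFinset b (1 : ℂ)).erase 1,
      (1 - ζ * ξ)) ≠ 0 := by
    apply Finset.prod_ne_zero_iff.mpr
    intro ζ hζ
    apply Finset.prod_ne_zero_iff.mpr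
    intro ξ hξ
    exact sub_ne_zero.mpr (Ne.symm (hprodne ζ hζ ξ hξ).2)
  rw [div_self hden]
  simp
end
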